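/- In a directed forest (every node has at most one parent) with N root nodes, if every initialized chain has length at most m and every marginalized chain has length at most c, and every node lies on either an initialized chain, a marginalized chain, or an initialized chain followed by a marginalized chain starting from some root, then the total number of nodes reachable from the roots is at most N * (c + m). -/
import Mathlib


/-- Node states in a delayed sampling graph. -/
inductive NodeState where
  | initialized
  | marginalized
  | realized
deriving DecidableEq

/-- In a directed forest with `N` root nodes, if from each root there is
a chain consisting of an initialized part (all `Initialized` nodes) of length at most `m`
followed by a marginalized part (no `Initialized` nodes) of length at most `c`, and every
node reachable from the roots lies on the chain of some root, then the number of reachable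
nodes is at most `N * (c + m)`. -/
theorem stmt0 {V : Type*} [DecidableEq V]
    (state : V → NodeState) (roots reachable : Finset V) (N m c : ℕ)
    (hN : roots.card = N)
    (chain : V → List V)
    (hdecomp : ∀ r ∈ roots, ∃ ip mp : List V, chain r = ip ++ mp ∧
      (∀ x ∈ ip, state x = NodeState.initialized) ∧ ip.length ≤ m ∧
      (∀ x ∈ mp, state x ≠ NodeState.initialized) ∧ mp.length ≤ c)
    (hcover : ∀ x ∈ reachable, ∃ r ∈ roots, x ∈ chain r) :
    reachable.card ≤ N * (c + m) := by
  have hsub : reachable ⊆ roots.biUnion (fun r => (chain r).toFinset) := by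
    intro x hx
    obtain ⟨r, hr, hxr⟩ := hcover x hx
    exact Finset.mem_biUnion.2 ⟨r, hr, List.mem_toFinset.2 hxr⟩
  calc reachable.card ≤ (roots.biUnion (fun r => (chain r).toFinset)).card :=
        Finset.card_le_card hsub
    _ ≤ ∑ r ∈ roots, (chain r).toFinset.card := Finset.card_biUnion_le
    _ ≤ ∑ r ∈ roots, (c + m) := by
        apply Finset.sum_le_sum
        intro r hr
        obtain ⟨ip, mp, heq, _, hip, _, hmp⟩ := hdecomp r hr
        calc (chain r).toFinset.card ≤ (chain r).length := (chain r).toFinset_card_le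
          _ = ip.length + mp.length := by rw [heq, List.length_append]
          _ ≤ c + m := by omega
    _ = N * (c + m) := by rw [Finset.sum_const, hN, smul_eq_mul]
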